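/- arXiv:1805.08266 — 6 statements merged into one kernel-verified Lean document; each statement's English description precedes it below -/
import Mathlib

section
/- Let φ: ℝ → ℝ be twice differentiable with φ, φ', φ'' of at most polynomial growth, and set M_φ := sup_{x ≥ 0} E[|φ'(xZ)² + φ''(xZ)φ(xZ)|]. If M_φ < ∞ and σ_w² M_φ < 1, then the variance function F(x) = σ_b² + σ_w² E[φ(√x Z)²] has a unique fixed point q ≥ 0, and for every initial value q¹ ≥ 0 the sequence defined by q^{l+1} = F(q^l) converges to q. -/
/-!
Write `F x = σ_b² + σ_w² G (√x)` with `G a = E[φ(aZ)²]`. Differentiating under the integral and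
then applying Stein's identity `E[Z h(Z)] = E[h'(Z)]` to `h z = 2 φ(az) φ'(az)` gives
`G' a = 2a E[φ'(aZ)² + φ''(aZ) φ(aZ)]`, so for `x > 0` the derivative of `F` is
`σ_w² E[φ'(√x Z)² + φ''(√x Z) φ(√x Z)]`, of absolute value at most `σ_w² M_φ < 1`.
Hence `F` is a contraction of `[0, ∞)`, and Banach's fixed point theorem applies.
-/

open MeasureTheory ProbabilityTheory Real Filter Topology Set

noncomputable def stdG : Measure ℝ := gaussianReal 0 1

open scoped NNReal

def PolyGrowth (f : ℝ → ℝ) : Prop := ∃ C : ℝ, ∃ n : ℕ, ∀ x, |f x| ≤ C * (1 + |x|) ^ n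

lemma integrable_one_add_abs_pow_gaussianReal {μ : ℝ} {v : ℝ≥0} (n : ℕ) :
    Integrable (fun x => (1 + |x|) ^ n) (gaussianReal μ v) := by
  refine ((integrable_exp_mul_gaussianReal n).add (integrable_exp_mul_gaussianReal (-n))).mono'
    (by fun_prop) (ae_of_all _ fun x => ?_)
  rw [Real.norm_of_nonneg (by positivity)]
  calc (1 + |x|) ^ n ≤ rexp |x| ^ n := by
        gcongr; linarith [add_one_le_exp |x|]
    _ = rexp (n * |x|) := by rw [← exp_nat_mul]
    _ ≤ rexp (n * x) + rexp (-n * x) := by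
        rcases abs_cases x with ⟨hx, -⟩ | ⟨hx, -⟩ <;> rw [hx]
        · linarith [exp_pos (-n * x)]
        · rw [mul_neg, ← neg_mul]; linarith [exp_pos (n * x)]

namespace PolyGrowth

variable {f g : ℝ → ℝ}

lemma const_nonneg {C : ℝ} {n : ℕ} (h : ∀ x, |f x| ≤ C * (1 + |x|) ^ n) : 0 ≤ C :=
  nonneg_of_mul_nonneg_left ((abs_nonneg _).trans (h 0)) (by positivity)

lemma mul (hf : PolyGrowth f) (hg : PolyGrowth g) : PolyGrowth fun x => f x * g x := by
  obtain ⟨C, n, hC⟩ := hf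
  obtain ⟨D, m, hD⟩ := hg
  refine ⟨C * D, n + m, fun x => ?_⟩
  rw [abs_mul, pow_add, mul_mul_mul_comm]
  exact mul_le_mul (hC x) (hD x) (abs_nonneg _) ((abs_nonneg _).trans (hC x))

lemma add (hf : PolyGrowth f) (hg : PolyGrowth g) : PolyGrowth fun x => f x + g x := by
  obtain ⟨C, n, hC⟩ := hf
  obtain ⟨D, m, hD⟩ := hg
  refine ⟨C + D, n + m, fun x => ?_⟩
  have h1 : (1 : ℝ) ≤ 1 + |x| := le_add_of_nonneg_right (abs_nonneg x)
  have hC0 := const_nonneg hC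
  have hD0 := const_nonneg hD
  calc |f x + g x| ≤ C * (1 + |x|) ^ n + D * (1 + |x|) ^ m :=
        (abs_add_le _ _).trans (add_le_add (hC x) (hD x))
    _ ≤ C * (1 + |x|) ^ (n + m) + D * (1 + |x|) ^ (n + m) := by
        gcongr <;> first | exact h1 | omega
    _ = (C + D) * (1 + |x|) ^ (n + m) := by ring

lemma const_mul (c : ℝ) (hf : PolyGrowth f) : PolyGrowth fun x => c * f x :=
  (show PolyGrowth fun _ => c from ⟨|c|, 0, fun x => by simp⟩).mul hf

lemma pow (hf : PolyGrowth f) (k : ℕ) : PolyGrowth fun x => f x ^ k := by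
  induction k with
  | zero => exact ⟨1, 0, fun x => by simp⟩
  | succ k ih => simpa only [pow_succ] using ih.mul hf

lemma id_mul (hf : PolyGrowth f) : PolyGrowth fun x => x * f x :=
  (show PolyGrowth id from ⟨1, 1, fun x => by simp⟩).mul hf

lemma abs_comp_mul_le (hf : PolyGrowth f) :
    ∃ C : ℝ, ∃ n : ℕ, ∀ A a z, |a| ≤ A → |f (a * z)| ≤ C * (1 + A) ^ n * (1 + |z|) ^ n := by
  obtain ⟨C, n, hC⟩ := hf
  have hC0 := const_nonneg hC
  refine ⟨C, n, fun A a z haA => ?_⟩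
  have h : 1 + |a * z| ≤ (1 + A) * (1 + |z|) := by
    rw [abs_mul]
    nlinarith [abs_nonneg a, abs_nonneg z]
  calc |f (a * z)| ≤ C * (1 + |a * z|) ^ n := hC _
    _ ≤ C * ((1 + A) * (1 + |z|)) ^ n := by gcongr
    _ = C * (1 + A) ^ n * (1 + |z|) ^ n := by rw [mul_pow, mul_assoc]

lemma comp_mul (hf : PolyGrowth f) (a : ℝ) : PolyGrowth fun z => f (a * z) := by
  obtain ⟨C, n, hC⟩ := hf.abs_comp_mul_le
  exact ⟨C * (1 + |a|) ^ n, n, fun z => hC |a| a z le_rfl⟩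

lemma integrable_gaussianReal (hf : PolyGrowth f) {μ : ℝ} {v : ℝ≥0}
    (hm : AEStronglyMeasurable f (gaussianReal μ v)) : Integrable f (gaussianReal μ v) := by
  obtain ⟨C, n, hC⟩ := hf
  exact ((integrable_one_add_abs_pow_gaussianReal n).const_mul C).mono' hm
    (ae_of_all _ fun x => hC x)

end PolyGrowth

lemma hasDerivAt_gaussianPDFReal_zero_one (x : ℝ) :
    HasDerivAt (gaussianPDFReal 0 1) (-x * gaussianPDFReal 0 1 x) x := by
  have e : gaussianPDFReal 0 1 = fun x => (√(2 * π))⁻¹ * rexp (-x ^ 2 / 2) := by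
    funext x; simp [gaussianPDFReal]
  have h : HasDerivAt (fun x : ℝ => -x ^ 2 / 2) (-x) x :=
    ((hasDerivAt_pow 2 x).neg.div_const 2).congr_deriv (by push_cast; ring)
  rw [e]
  exact (h.exp.const_mul (√(2 * π))⁻¹).congr_deriv (by beta_reduce; ring)

lemma integrable_stdG_iff {f : ℝ → ℝ} :
    Integrable f stdG ↔ Integrable fun x => f x * gaussianPDFReal 0 1 x := by
  rw [stdG, gaussianReal_of_var_ne_zero _ one_ne_zero, integrable_withDensity_iff
    (measurable_gaussianPDF _ _) (ae_of_all _ fun _ => gaussianPDF_lt_top)]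
  simp only [toReal_gaussianPDF]

lemma integral_stdG_eq (f : ℝ → ℝ) :
    ∫ x, f x ∂stdG = ∫ x, f x * gaussianPDFReal 0 1 x := by
  rw [stdG, integral_gaussianReal_eq_integral_smul one_ne_zero]
  simp only [smul_eq_mul, mul_comm]

/-- Stein's identity: integrate by parts against the density `p`, using `p' = -z p`. -/
theorem integral_mul_stdG_eq_integral_deriv {h h' : ℝ → ℝ} (hd : ∀ z, HasDerivAt h (h' z) z)
    (hi : Integrable h stdG) (hzi : Integrable (fun z => z * h z) stdG)
    (hi' : Integrable h' stdG) :
    ∫ z, z * h z ∂stdG = ∫ z, h' z ∂stdG := by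
  rw [integrable_stdG_iff] at hi hzi hi'
  have ibp := integral_mul_deriv_eq_deriv_mul_of_integrable (fun z _ => hd z)
    (fun z _ => hasDerivAt_gaussianPDFReal_zero_one z)
    (hzi.neg.congr (ae_of_all _ fun z => by simp only [Pi.neg_apply, Pi.mul_apply]; ring)) hi' hi
  rw [integral_stdG_eq, integral_stdG_eq, ← neg_neg (∫ z, h' z * _), ← ibp, ← integral_neg]
  exact integral_congr_ae (ae_of_all _ fun z => by ring)

lemma hasDerivAt_integral_comp_mul {ψ ψ' : ℝ → ℝ} (hd : ∀ x, HasDerivAt ψ (ψ' x) x)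
    (hc' : Continuous ψ') (hg : PolyGrowth ψ) (hg' : PolyGrowth ψ') (a₀ : ℝ) :
    HasDerivAt (fun a => ∫ z, ψ (a * z) ∂stdG) (∫ z, z * ψ' (a₀ * z) ∂stdG) a₀ := by
  have hc : Continuous ψ := continuous_iff_continuousAt.2 fun x => (hd x).continuousAt
  obtain ⟨C, n, hC⟩ := hg'.abs_comp_mul_le
  have hball : ∀ a ∈ Metric.ball a₀ 1, |a| ≤ |a₀| + 1 := fun a ha => by
    have := abs_sub_abs_le_abs_sub a a₀
    rw [Metric.mem_ball, Real.dist_eq] at ha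
    linarith
  refine (hasDerivAt_integral_of_dominated_loc_of_deriv_le (μ := stdG)
    (F' := fun a z => z * ψ' (a * z)) (Metric.ball_mem_nhds a₀ one_pos)
    (bound := fun z => C * (1 + (|a₀| + 1)) ^ n * (1 + |z|) ^ (n + 1))
    (.of_forall fun a => (hc.comp (continuous_const_mul a)).aestronglyMeasurable)
    ((hg.comp_mul a₀).integrable_gaussianReal
      (hc.comp (continuous_const_mul a₀)).aestronglyMeasurable)
    (continuous_id.mul (hc'.comp (continuous_const_mul a₀))).aestronglyMeasurable
    (ae_of_all _ fun z a ha => ?_) ((integrable_one_add_abs_pow_gaussianReal _).const_mul _)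
    (ae_of_all _ fun z a _ => ?_)).2
  · calc ‖z * ψ' (a * z)‖ = |z| * |ψ' (a * z)| := by rw [Real.norm_eq_abs, abs_mul]
      _ ≤ (1 + |z|) * (C * (1 + (|a₀| + 1)) ^ n * (1 + |z|) ^ n) :=
          mul_le_mul (by linarith [abs_nonneg z]) (hC _ a z (hball a ha)) (abs_nonneg _)
            (by positivity)
      _ = C * (1 + (|a₀| + 1)) ^ n * (1 + |z|) ^ (n + 1) := by ring
  · exact ((hd (a * z)).comp a (hasDerivAt_mul_const z)).congr_deriv (mul_comm _ _)

theorem hasDerivAt_integral_comp_mul_eq_mul_integral {ψ ψ' ψ'' : ℝ → ℝ}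
    (hd : ∀ x, HasDerivAt ψ (ψ' x) x) (hd' : ∀ x, HasDerivAt ψ' (ψ'' x) x) (hm : Measurable ψ'')
    (hg : PolyGrowth ψ) (hg' : PolyGrowth ψ') (hg'' : PolyGrowth ψ'') (a : ℝ) :
    HasDerivAt (fun a => ∫ z, ψ (a * z) ∂stdG) (a * ∫ z, ψ'' (a * z) ∂stdG) a := by
  have hc' : Continuous ψ' := continuous_iff_continuousAt.2 fun x => (hd' x).continuousAt
  have hm' : AEStronglyMeasurable (fun z => ψ' (a * z)) stdG :=
    (hc'.comp (continuous_const_mul a)).aestronglyMeasurable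
  refine (hasDerivAt_integral_comp_mul hd hc' hg hg' a).congr_deriv ?_
  rw [← integral_const_mul]
  exact integral_mul_stdG_eq_integral_deriv
    (fun z => ((hd' (a * z)).comp z (hasDerivAt_const_mul a)).congr_deriv (mul_comm _ _))
    ((hg'.comp_mul a).integrable_gaussianReal hm')
    ((hg'.comp_mul a).id_mul.integrable_gaussianReal (aestronglyMeasurable_id.mul hm'))
    (((hg''.comp_mul a).const_mul a).integrable_gaussianReal
      ((hm.comp (measurable_const_mul a)).const_mul a).aestronglyMeasurable)

theorem hasDerivAt_integral_sq_comp_mul {φ φ' φ'' : ℝ → ℝ}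
    (hd1 : ∀ x, HasDerivAt φ (φ' x) x) (hd2 : ∀ x, HasDerivAt φ' (φ'' x) x)
    (hg : PolyGrowth φ) (hg' : PolyGrowth φ') (hg'' : PolyGrowth φ'') (a : ℝ) :
    HasDerivAt (fun a => ∫ z, φ (a * z) ^ 2 ∂stdG)
      (2 * a * ∫ z, φ' (a * z) ^ 2 + φ'' (a * z) * φ (a * z) ∂stdG) a := by
  have hm : Measurable φ := (continuous_iff_continuousAt.2 fun x => (hd1 x).continuousAt).measurable
  have hm' : Measurable φ' :=
    (continuous_iff_continuousAt.2 fun x => (hd2 x).continuousAt).measurable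
  have hm'' : Measurable φ'' := by
    rw [show φ'' = deriv φ' from funext fun x => (hd2 x).deriv.symm]
    exact measurable_deriv φ'
  have h := hasDerivAt_integral_comp_mul_eq_mul_integral (ψ := fun x => φ x ^ 2)
    (ψ' := fun x => 2 * (φ x * φ' x)) (ψ'' := fun x => 2 * (φ' x ^ 2 + φ'' x * φ x))
    (fun x => ((hd1 x).pow 2).congr_deriv (by ring))
    (fun x => (((hd1 x).mul (hd2 x)).const_mul 2).congr_deriv (by ring))
    (by fun_prop) (hg.pow 2) ((hg.mul hg').const_mul 2)
    (((hg'.pow 2).add (hg''.mul hg)).const_mul 2) a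
  rw [integral_const_mul, ← mul_assoc, mul_comm a 2] at h
  exact h

lemma hasDerivAt_comp_sqrt {G J : ℝ → ℝ} {x : ℝ} (hx : 0 < x)
    (hG : HasDerivAt G (2 * √x * J √x) √x) : HasDerivAt (fun y => G √y) (J √x) x :=
  (hG.comp x (hasDerivAt_sqrt hx.ne')).congr_deriv (by field_simp)

lemma lipschitzOnWith_Ici_of_hasDerivAt {f f' : ℝ → ℝ} {K : ℝ≥0} {a : ℝ}
    (hc : ContinuousOn f (Ici a)) (hd : ∀ x, a < x → HasDerivAt f (f' x) x)
    (hb : ∀ x, a < x → |f' x| ≤ K) : LipschitzOnWith K f (Ici a) := by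
  rw [← closure_Ioi] at hc ⊢
  exact LipschitzOnWith.closure hc <| (convex_Ioi a).lipschitzOnWith_of_nnnorm_hasDerivWithin_le
    (fun x hx => (hd x hx).hasDerivWithinAt) fun x hx => hb x hx

theorem LipschitzOnWith.exists_fixedPoint_tendsto {α : Type*} [MetricSpace α] {s : Set α}
    {f : α → α} {K : ℝ≥0} (hf : LipschitzOnWith K f s) (hK : K < 1) (hsc : IsComplete s)
    (hne : s.Nonempty) (hsf : MapsTo f s s) :
    ∃ q ∈ s, f q = q ∧ (∀ q' ∈ s, f q' = q' → q' = q) ∧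
      ∀ x ∈ s, Tendsto (fun l => f^[l] x) atTop (𝓝 q) := by
  have hc : ContractingWith K (hsf.restrict f s s) := ⟨hK, hf.mapsToRestrict hsf⟩
  have huniq : ∀ x ∈ s, ∀ y ∈ s, f x = x → f y = y → x = y := fun x hx y hy hfx hfy =>
    congrArg Subtype.val <| hc.fixedPoint_unique' (x := ⟨x, hx⟩) (y := ⟨y, hy⟩)
      (Subtype.ext hfx) (Subtype.ext hfy)
  obtain ⟨x₀, hx₀⟩ := hne
  obtain ⟨q, hq, hfq, -⟩ := hc.exists_fixedPoint' hsc hsf hx₀ (edist_ne_top _ _)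
  refine ⟨q, hq, hfq, fun q' hq' hfq' => huniq q' hq' q hq hfq' hfq, fun x hx => ?_⟩
  obtain ⟨y, hy, hfy, hlim, -⟩ := hc.exists_fixedPoint' hsc hsf hx (edist_ne_top _ _)
  rwa [huniq y hy q hq hfy hfq] at hlim

theorem stmt0_general (φ φ' φ'' : ℝ → ℝ)
    (hd1 : ∀ x, HasDerivAt φ (φ' x) x)
    (hd2 : ∀ x, HasDerivAt φ' (φ'' x) x)
    (hpoly : ∃ C : ℝ, ∃ n : ℕ, 0 ≤ C ∧ ∀ x : ℝ,
      |φ x| ≤ C * (1 + |x|) ^ n ∧ |φ' x| ≤ C * (1 + |x|) ^ n ∧ |φ'' x| ≤ C * (1 + |x|) ^ n)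
    (σb σw : ℝ)
    (Mφ : ℝ)
    (hM : IsLUB {y : ℝ | ∃ x : ℝ, 0 ≤ x ∧
      y = ∫ z, |φ' (x * z) ^ 2 + φ'' (x * z) * φ (x * z)| ∂stdG} Mφ)
    (hcontr : σw ^ 2 * Mφ < 1)
    (F : ℝ → ℝ)
    (hF : ∀ x, F x = σb ^ 2 + σw ^ 2 * ∫ z, (φ (Real.sqrt x * z)) ^ 2 ∂stdG) :
    ∃ q : ℝ, 0 ≤ q ∧ F q = q ∧
      (∀ q' : ℝ, 0 ≤ q' → F q' = q' → q' = q) ∧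
      ∀ q1 : ℝ, 0 ≤ q1 → Tendsto (fun l => F^[l] q1) atTop (𝓝 q) := by
  obtain ⟨C, n, -, hb⟩ := hpoly
  set J := fun a => ∫ z, φ' (a * z) ^ 2 + φ'' (a * z) * φ (a * z) ∂stdG
  have hG := hasDerivAt_integral_sq_comp_mul hd1 hd2 ⟨C, n, fun x => (hb x).1⟩
    ⟨C, n, fun x => (hb x).2.1⟩ ⟨C, n, fun x => (hb x).2.2⟩
  have hJ : ∀ a, 0 ≤ a → |J a| ≤ Mφ := fun a ha =>
    (abs_integral_le_integral_abs).trans (hM.1 ⟨a, ha, rfl⟩)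
  have hFeq : F = fun x => σb ^ 2 + σw ^ 2 * ∫ z, φ (√x * z) ^ 2 ∂stdG := funext hF
  have hlip : LipschitzOnWith (σw ^ 2 * Mφ).toNNReal F (Ici 0) := by
    refine lipschitzOnWith_Ici_of_hasDerivAt (f' := fun x => σw ^ 2 * J √x) ?_ (fun x hx => ?_)
      (fun x hx => ?_)
    · rw [hFeq]
      exact (continuous_const.add (continuous_const.mul
        ((continuous_iff_continuousAt.2 fun a => (hG a).continuousAt).comp
          continuous_sqrt))).continuousOn
    · rw [hFeq]
      exact ((hasDerivAt_comp_sqrt (J := J) hx (hG √x)).const_mul _).const_add _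
    · rw [abs_mul, abs_of_nonneg (sq_nonneg σw)]
      exact (mul_le_mul_of_nonneg_left (hJ _ (sqrt_nonneg x)) (sq_nonneg σw)).trans
        (le_coe_toNNReal _)
  have hmaps : MapsTo F (Ici 0) (Ici 0) := fun x _ => by
    rw [mem_Ici, hF]
    have : 0 ≤ ∫ z, φ (√x * z) ^ 2 ∂stdG := integral_nonneg fun z => sq_nonneg _
    positivity
  have hK : (σw ^ 2 * Mφ).toNNReal < 1 := by simpa using hcontr
  exact hlip.exists_fixedPoint_tendsto hK isClosed_Ici.isComplete nonempty_Ici hmaps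

/-- If `M_φ := sup_{x ≥ 0} E[|φ'(xZ)² + φ''(xZ)φ(xZ)|] < ∞` and `σ_w² M_φ < 1`, the variance
function `F(x) = σ_b² + σ_w² E[φ(√x Z)²]` has a unique fixed point `q ≥ 0` and the variance
recursion converges to it from any nonnegative initial value. -/
theorem stmt0 (φ φ' φ'' : ℝ → ℝ)
    (hd1 : ∀ x, HasDerivAt φ (φ' x) x)
    (hd2 : ∀ x, HasDerivAt φ' (φ'' x) x)
    (hpoly : ∃ C : ℝ, ∃ n : ℕ, 0 ≤ C ∧ ∀ x : ℝ,
      |φ x| ≤ C * (1 + |x|) ^ n ∧ |φ' x| ≤ C * (1 + |x|) ^ n ∧ |φ'' x| ≤ C * (1 + |x|) ^ n)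
    (σb σw : ℝ) (hσb : 0 ≤ σb) (hσw : 0 < σw)
    (Mφ : ℝ)
    (hM : IsLUB {y : ℝ | ∃ x : ℝ, 0 ≤ x ∧
      y = ∫ z, |φ' (x * z) ^ 2 + φ'' (x * z) * φ (x * z)| ∂stdG} Mφ)
    (hcontr : σw ^ 2 * Mφ < 1)
    (F : ℝ → ℝ)
    (hF : ∀ x, F x = σb ^ 2 + σw ^ 2 * ∫ z, (φ (Real.sqrt x * z)) ^ 2 ∂stdG) :
    ∃ q : ℝ, 0 ≤ q ∧ F q = q ∧
      (∀ q' : ℝ, 0 ≤ q' → F q' = q' → q' = q) ∧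
      ∀ q1 : ℝ, 0 ≤ q1 → Tendsto (fun l => F^[l] q1) atTop (𝓝 q) :=
  stmt0_general φ φ' φ'' hd1 hd2 hpoly σb σw Mφ hM hcontr F hF
end

section
/- Let λ, β ∈ ℝ, not both zero, and let φ(x) = λx for x > 0 and φ(x) = βx for x ≤ 0 (a ReLU-like activation). Then E[φ(√x Z)²] = ((λ² + β²)/2) · x for every x ≥ 0; consequently, if σ_w² < 2/(λ² + β²), then for any initial value q¹ ≥ 0, the sequence q^{l+1} = σ_b² + σ_w² E[φ(√(q^l) Z)²] converges to q = σ_b² / (1 − σ_w² (λ² + β²)/2). -/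
open MeasureTheory ProbabilityTheory Real Filter Topology Set

instance isNegInvariant_gaussianReal_zero (v : NNReal) : (gaussianReal 0 v).IsNegInvariant :=
  ⟨by rw [Measure.neg_def, gaussianReal_map_neg, neg_zero]⟩

lemma integral_sq_gaussianReal_zero (v : NNReal) : ∫ x, x ^ 2 ∂gaussianReal 0 v = v :=
  (variance_of_integral_eq_zero aemeasurable_id integral_id_gaussianReal).symm.trans
    variance_id_gaussianReal

lemma integrable_sq_gaussianReal (m : ℝ) (v : NNReal) :
    Integrable (fun x => x ^ 2) (gaussianReal m v) :=
  (memLp_id_gaussianReal 2).integrable_sq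

lemma integral_indicator_Ioi_sq_of_isNegInvariant {μ : Measure ℝ} [μ.IsNegInvariant]
    (h : Integrable (fun x => x ^ 2) μ) :
    ∫ x, (Ioi 0).indicator (fun x => x ^ 2) x ∂μ = (∫ x, x ^ 2 ∂μ) / 2 := by
  have hsplit : ∀ x : ℝ, x ^ 2 =
      (Ioi 0).indicator (fun x => x ^ 2) x + (Ioi 0).indicator (fun x => x ^ 2) (-x) := by
    intro x
    rcases lt_trichotomy x 0 with hx | rfl | hx
    · simp [indicator, hx, hx.not_gt]
    · simp
    · simp [indicator, hx, hx.not_gt]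
  have hind : Integrable ((Ioi 0).indicator fun x : ℝ => x ^ 2) μ := h.indicator measurableSet_Ioi
  have hsum : ∫ x, x ^ 2 ∂μ = ∫ x, (Ioi 0).indicator (fun x => x ^ 2) x ∂μ
      + ∫ x, (Ioi 0).indicator (fun x => x ^ 2) (-x) ∂μ := by
    rw [← integral_add hind hind.comp_neg]
    exact integral_congr_ae (ae_of_all _ hsplit)
  rw [hsum, integral_neg_eq_self ((Ioi 0).indicator fun x : ℝ => x ^ 2)]
  ring

section LeakyReLU

variable {lam bet : ℝ} {φ : ℝ → ℝ} (hφ : ∀ x, φ x = if 0 < x then lam * x else bet * x)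
include hφ

lemma leakyReLU_nonneg_mul {c : ℝ} (hc : 0 ≤ c) (z : ℝ) : φ (c * z) = c * φ z := by
  rcases hc.eq_or_lt with rfl | hc
  · simp [hφ]
  · simp only [hφ, mul_pos_iff_of_pos_left hc]
    split_ifs <;> ring

lemma leakyReLU_sq (z : ℝ) :
    φ z ^ 2 = lam ^ 2 * (Ioi 0).indicator (fun x => x ^ 2) z
      + bet ^ 2 * (Ioi 0).indicator (fun x => x ^ 2) (-z) := by
  rcases lt_trichotomy z 0 with hz | rfl | hz
  · simp [hφ, indicator, hz, hz.not_gt, mul_pow]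
  · simp [hφ]
  · simp [hφ, indicator, hz, hz.not_gt, mul_pow]

lemma integral_leakyReLU_sq_of_isNegInvariant {μ : Measure ℝ} [μ.IsNegInvariant]
    (h : Integrable (fun x => x ^ 2) μ) :
    ∫ z, φ z ^ 2 ∂μ = (lam ^ 2 + bet ^ 2) / 2 * ∫ z, z ^ 2 ∂μ := by
  have hind : Integrable ((Ioi 0).indicator fun x : ℝ => x ^ 2) μ := h.indicator measurableSet_Ioi
  simp_rw [leakyReLU_sq hφ]
  rw [integral_add (hind.const_mul _) (hind.comp_neg.const_mul _), integral_const_mul,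
    integral_const_mul, integral_neg_eq_self ((Ioi 0).indicator fun x : ℝ => x ^ 2),
    integral_indicator_Ioi_sq_of_isNegInvariant h]
  ring

lemma integral_leakyReLU_sqrt_mul_sq_stdG {x : ℝ} (hx : 0 ≤ x) :
    ∫ z, φ (√x * z) ^ 2 ∂stdG = (lam ^ 2 + bet ^ 2) / 2 * x := by
  simp_rw [leakyReLU_nonneg_mul hφ (sqrt_nonneg x), mul_pow, sq_sqrt hx]
  unfold stdG
  rw [integral_const_mul, integral_leakyReLU_sq_of_isNegInvariant hφ
    (integrable_sq_gaussianReal 0 1), integral_sq_gaussianReal_zero]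
  simp only [NNReal.coe_one]
  ring

end LeakyReLU

lemma tendsto_of_affine_recurrence {𝕜 : Type*} [NormedField 𝕜] {a c : 𝕜} (hc : ‖c‖ < 1)
    {q : ℕ → 𝕜} (hq : ∀ n, q (n + 1) = a + c * q n) :
    Tendsto q atTop (𝓝 (a / (1 - c))) := by
  have hc1 : 1 - c ≠ 0 := fun h => by
    rw [← sub_eq_zero.mp h, norm_one] at hc; exact lt_irrefl _ hc
  set L := a / (1 - c)
  have hfix : a + c * L = L := by
    simp only [L]; field_simp; ring
  have hclosed : q = fun n => L + c ^ n * (q 0 - L) := by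
    funext n
    induction n with
    | zero => simp
    | succ n ih => rw [hq, ih]; linear_combination hfix
  rw [hclosed]
  simpa using ((tendsto_pow_atTop_nhds_zero_of_norm_lt_one hc).mul_const (q 0 - L)).const_add L

theorem stmt4_general (lam bet : ℝ)
    (φ : ℝ → ℝ) (hφ : ∀ x, φ x = if 0 < x then lam * x else bet * x) :
    (∀ x : ℝ, 0 ≤ x →
      (∫ z, (φ (Real.sqrt x * z)) ^ 2 ∂stdG) = (lam ^ 2 + bet ^ 2) / 2 * x) ∧
    ∀ σb σw : ℝ, 0 ≤ σb → 0 < σw → σw ^ 2 < 2 / (lam ^ 2 + bet ^ 2) →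
      ∀ q : ℕ → ℝ, 0 ≤ q 0 →
        (∀ l, q (l + 1) = σb ^ 2 + σw ^ 2 * ∫ z, (φ (Real.sqrt (q l) * z)) ^ 2 ∂stdG) →
        Tendsto q atTop (𝓝 (σb ^ 2 / (1 - σw ^ 2 * (lam ^ 2 + bet ^ 2) / 2))) := by
  refine ⟨fun x hx => integral_leakyReLU_sqrt_mul_sq_stdG hφ hx, ?_⟩
  intro σb σw _ _ hlt q hq0 hrec
  have hq : ∀ l, 0 ≤ q l
    | 0 => hq0
    | l + 1 => by
      rw [hrec]
      have : 0 ≤ ∫ z, φ (√(q l) * z) ^ 2 ∂stdG := integral_nonneg fun z => sq_nonneg _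
      positivity
  have hs : 0 < lam ^ 2 + bet ^ 2 :=
    (div_pos_iff_of_pos_left two_pos).mp ((sq_nonneg σw).trans_lt hlt)
  have hc : ‖σw ^ 2 * (lam ^ 2 + bet ^ 2) / 2‖ < 1 := by
    rw [Real.norm_of_nonneg (by positivity), div_lt_one two_pos, ← lt_div_iff₀ hs]
    exact hlt
  refine tendsto_of_affine_recurrence hc fun l => ?_
  rw [hrec, integral_leakyReLU_sqrt_mul_sq_stdG hφ (hq l)]
  ring

/-- For a ReLU-like activation `φ(x) = λx (x>0), βx (x≤0)`, `E[φ(√x Z)²] = ((λ²+β²)/2) x` for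
`x ≥ 0`; consequently, if `σ_w² < 2/(λ²+β²)` then the variance recursion converges to
`σ_b² / (1 − σ_w²(λ²+β²)/2)` from any nonnegative initial value. -/
theorem stmt4 (lam bet : ℝ) (hne : ¬(lam = 0 ∧ bet = 0))
    (φ : ℝ → ℝ) (hφ : ∀ x, φ x = if 0 < x then lam * x else bet * x) :
    (∀ x : ℝ, 0 ≤ x →
      (∫ z, (φ (Real.sqrt x * z)) ^ 2 ∂stdG) = (lam ^ 2 + bet ^ 2) / 2 * x) ∧
    ∀ σb σw : ℝ, 0 ≤ σb → 0 < σw → σw ^ 2 < 2 / (lam ^ 2 + bet ^ 2) →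
      ∀ q : ℕ → ℝ, 0 ≤ q 0 →
        (∀ l, q (l + 1) = σb ^ 2 + σw ^ 2 * ∫ z, (φ (Real.sqrt (q l) * z)) ^ 2 ∂stdG) →
        Tendsto q atTop (𝓝 (σb ^ 2 / (1 - σw ^ 2 * (lam ^ 2 + bet ^ 2) / 2))) :=
  stmt4_general lam bet φ hφ
end

section
/- For every x ∈ [0,1], 2 · E[max(Z₁, 0) · max(x Z₁ + √(1−x²) Z₂, 0)] = (1/π) x arcsin(x) + (1/π) √(1−x²) + x/2, where Z₁, Z₂ are i.i.d. standard Gaussian random variables. -/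
/-! The integrand is positively homogeneous of degree 2, so in polar coordinates the Gaussian
integral factors into the radial moment `(2π)⁻¹ ∫₀^∞ r³ e^{-r²/2} dr = π⁻¹` times the integral of
the integrand over the unit circle. Writing `x = cos φ` with `φ = arccos x`, the second factor on
the circle is `max (cos (θ - φ)) 0`, so the angular integrand is `cos θ cos (θ - φ)` on
`[φ - π/2, π/2]` and `0` elsewhere; it integrates to `(sin φ + (π - φ) cos φ) / 2`, and
`π - arccos x = π/2 + arcsin x` gives the closed form. -/

open MeasureTheory ProbabilityTheory Real Filter Topology Set

/-- The law of a pair `(Z₁, Z₂)` of i.i.d. standard Gaussians. -/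
noncomputable def stdG2 : Measure (ℝ × ℝ) := stdG.prod stdG

lemma integral_stdG2_eq_integral_gaussianPDFReal_mul (F : ℝ × ℝ → ℝ) :
    ∫ p, F p ∂stdG2 = ∫ p, gaussianPDFReal 0 1 p.1 * gaussianPDFReal 0 1 p.2 * F p := by
  rw [stdG2, stdG, gaussianReal_of_var_ne_zero 0 one_ne_zero,
    prod_withDensity (measurable_gaussianPDF 0 1) (measurable_gaussianPDF 0 1),
    ← Measure.volume_eq_prod, integral_withDensity_eq_integral_toReal_smul (by fun_prop)
      (ae_of_all _ fun _ => by simp [gaussianPDF, ENNReal.mul_lt_top])]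
  simp only [gaussianPDF, ENNReal.toReal_mul, smul_eq_mul,
    ENNReal.toReal_ofReal (gaussianPDFReal_nonneg _ _ _)]

lemma gaussianPDFReal_mul_gaussianPDFReal (a b : ℝ) :
    gaussianPDFReal 0 1 a * gaussianPDFReal 0 1 b = (2 * π)⁻¹ * rexp (-(a ^ 2 + b ^ 2) / 2) := by
  simp only [gaussianPDFReal, NNReal.coe_one, mul_one, sub_zero]
  rw [mul_mul_mul_comm, ← mul_inv, Real.mul_self_sqrt (by positivity), ← Real.exp_add]
  ring_nf

lemma integral_pow_three_mul_exp_neg_sq_div_two :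
    ∫ r in Ioi (0:ℝ), r ^ 3 * rexp (-r ^ 2 / 2) = 2 := by
  have h := integral_rpow_mul_exp_neg_mul_rpow (p := 2) (q := 3) (b := 1 / 2)
    (by norm_num) (by norm_num) (by norm_num)
  norm_num at h
  convert h using 5
  ring

theorem integral_stdG2_eq_of_homogeneous {F : ℝ × ℝ → ℝ}
    (hF : ∀ r : ℝ, 0 < r → ∀ p : ℝ × ℝ, F (r • p) = r ^ 2 * F p) :
    ∫ p, F p ∂stdG2 = π⁻¹ * ∫ θ in Ioo (-π) π, F (cos θ, sin θ) := by
  have hpolar : ∀ q ∈ polarCoord.target,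
      q.1 • (gaussianPDFReal 0 1 (polarCoord.symm q).1 * gaussianPDFReal 0 1 (polarCoord.symm q).2
        * F (polarCoord.symm q)) =
      (fun q : ℝ × ℝ => (2 * π)⁻¹ * (q.1 ^ 3 * rexp (-q.1 ^ 2 / 2)) * F (cos q.2, sin q.2)) q := by
    rintro ⟨r, θ⟩ ⟨hr, -⟩
    have hsymm : polarCoord.symm (r, θ) = r • (cos θ, sin θ) := by simp
    rw [hsymm, hF r hr, gaussianPDFReal_mul_gaussianPDFReal]
    simp only [Prod.smul_mk, smul_eq_mul]
    rw [show (r * cos θ) ^ 2 + (r * sin θ) ^ 2 = r ^ 2 by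
      rw [mul_pow, mul_pow, ← mul_add, cos_sq_add_sin_sq, mul_one]]
    ring
  rw [integral_stdG2_eq_integral_gaussianPDFReal_mul, ← integral_comp_polarCoord_symm,
    setIntegral_congr_fun polarCoord.open_target.measurableSet hpolar, polarCoord_target,
    Measure.volume_eq_prod, ← Measure.prod_restrict,
    integral_prod_mul (fun r : ℝ => (2 * π)⁻¹ * (r ^ 3 * rexp (-r ^ 2 / 2)))
      (fun θ : ℝ => F (cos θ, sin θ)), integral_const_mul,
    integral_pow_three_mul_exp_neg_sq_div_two]
  field_simp

lemma integral_cos_mul_cos_sub (φ a b : ℝ) :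
    ∫ θ in a..b, cos θ * cos (θ - φ) =
      (sin (2 * b - φ) - sin (2 * a - φ)) / 4 + (b - a) * cos φ / 2 := by
  have hderiv : ∀ θ, HasDerivAt (fun θ => sin (2 * θ - φ) / 4 + θ * cos φ / 2)
      (cos θ * cos (θ - φ)) θ := fun θ => by
    have hsum : cos (2 * θ - φ) + cos φ = 2 * (cos θ * cos (θ - φ)) := by
      have hadd := cos_add θ (θ - φ)
      have hsub := cos_sub θ (θ - φ)
      rw [show θ + (θ - φ) = 2 * θ - φ by ring] at hadd
      rw [sub_sub_cancel] at hsub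
      linarith
    refine (((((hasDerivAt_id θ).const_mul 2).sub_const φ).sin.div_const 4).add
      (((hasDerivAt_id θ).mul_const (cos φ)).div_const 2)).congr_deriv ?_
    simp only [id]
    linarith
  rw [intervalIntegral.integral_eq_sub_of_hasDerivAt (fun θ _ => hderiv θ)
    ((by fun_prop : Continuous _).intervalIntegrable _ _)]
  ring

lemma max_cos_mul_max_cos_sub_eq_indicator {φ θ : ℝ} (h0 : 0 ≤ φ) (hπ : φ ≤ π)
    (hθ : θ ∈ Ioo (-π) π) :
    max (cos θ) 0 * max (cos (θ - φ)) 0 =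
      (Icc (φ - π / 2) (π / 2)).indicator (fun θ => cos θ * cos (θ - φ)) θ := by
  by_cases hmem : θ ∈ Icc (φ - π / 2) (π / 2)
  · rw [indicator_of_mem hmem,
      max_eq_left (cos_nonneg_of_mem_Icc ⟨by linarith [hmem.1], hmem.2⟩),
      max_eq_left (cos_nonneg_of_mem_Icc ⟨by linarith [hmem.1], by linarith [hmem.2]⟩)]
  rw [indicator_of_notMem hmem]
  by_cases hcos : cos θ ≤ 0
  · rw [max_eq_right hcos, zero_mul]
  have hθ_lt : θ < π / 2 := by
    by_contra! h
    exact hcos (cos_nonpos_of_pi_div_two_le_of_le h (by linarith [hθ.2, pi_pos]))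
  have hθ_gt : -(π / 2) < θ := by
    by_contra! h
    refine hcos ?_
    rw [← cos_neg]
    exact cos_nonpos_of_pi_div_two_le_of_le (by linarith) (by linarith [hθ.1, pi_pos])
  have hθφ : θ < φ - π / 2 := by
    by_contra! h
    exact hmem ⟨h, hθ_lt.le⟩
  have hcos_sub : cos (θ - φ) ≤ 0 := by
    rw [← cos_neg, neg_sub]
    exact cos_nonpos_of_pi_div_two_le_of_le (by linarith) (by linarith)
  rw [max_eq_right hcos_sub, mul_zero]

lemma integral_max_cos_mul_max_cos_sub {φ : ℝ} (h0 : 0 ≤ φ) (hπ : φ ≤ π) :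
    ∫ θ in Ioo (-π) π, max (cos θ) 0 * max (cos (θ - φ)) 0 =
      (sin φ + (π - φ) * cos φ) / 2 := by
  have hsub : Icc (φ - π / 2) (π / 2) ⊆ Ioo (-π) π := fun θ hθ =>
    ⟨by linarith [hθ.1, pi_pos], by linarith [hθ.2, pi_pos]⟩
  rw [setIntegral_congr_fun measurableSet_Ioo
      (fun θ hθ => max_cos_mul_max_cos_sub_eq_indicator h0 hπ hθ),
    setIntegral_indicator measurableSet_Icc, inter_eq_self_of_subset_right hsub,
    integral_Icc_eq_integral_Ioc, ← intervalIntegral.integral_of_le (by linarith),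
    integral_cos_mul_cos_sub]
  rw [show 2 * (π / 2) - φ = π - φ by ring, show 2 * (φ - π / 2) - φ = φ - π by ring,
    sin_pi_sub, sin_sub_pi]
  ring

lemma mul_cos_add_sqrt_mul_sin_eq_cos_sub_arccos {x : ℝ} (hx₁ : -1 ≤ x) (hx₂ : x ≤ 1) (θ : ℝ) :
    x * cos θ + √(1 - x ^ 2) * sin θ = cos (θ - arccos x) := by
  rw [cos_sub, cos_arccos hx₁ hx₂, sin_arccos]
  ring

/-- Closed form of the ReLU correlation function on the edge of chaos: for `x ∈ [0,1]`,
`2 E[max(Z₁,0) max(xZ₁ + √(1−x²)Z₂, 0)] = (1/π) x arcsin(x) + (1/π)√(1−x²) + x/2`. -/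
theorem stmt6 : ∀ x ∈ Icc (0:ℝ) 1,
    2 * ∫ p, max p.1 0 * max (x * p.1 + Real.sqrt (1 - x ^ 2) * p.2) 0 ∂stdG2 =
      (1 / π) * x * Real.arcsin x + (1 / π) * Real.sqrt (1 - x ^ 2) + x / 2 := by
  rintro x ⟨hx₀, hx₁⟩
  rw [integral_stdG2_eq_of_homogeneous
    (F := fun p => max p.1 0 * max (x * p.1 + √(1 - x ^ 2) * p.2) 0) fun r hr p => ?_]
  · simp_rw [mul_cos_add_sqrt_mul_sin_eq_cos_sub_arccos (by linarith : -1 ≤ x) hx₁]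
    rw [integral_max_cos_mul_max_cos_sub (arccos_nonneg x) (arccos_le_pi x), sin_arccos,
      cos_arccos (by linarith) hx₁, arccos_eq_pi_div_two_sub_arcsin]
    field_simp
    ring
  · have hrelu (a : ℝ) : max (r * a) 0 = r * max a 0 := by
      rw [mul_max_of_nonneg _ _ hr.le, mul_zero]
    simp only [Prod.smul_fst, Prod.smul_snd, smul_eq_mul]
    rw [show x * (r * p.1) + √(1 - x ^ 2) * (r * p.2) = r * (x * p.1 + √(1 - x ^ 2) * p.2) by ring,
      hrelu, hrelu]
    ring
end

section
/- Let f(x) = (1/π) x arcsin(x) + (1/π) √(1−x²) + x/2 for x ∈ [0,1]. Then there exists a constant C > 0 such that for all x ∈ [0,1], |f(x) − x − (2√2/(3π)) (1−x)^{3/2}| ≤ C (1−x)^{5/2}. -/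
/-!
Since `(x arcsin x + √(1 - x²))' = arcsin x`, the remainder
`R(x) = f(x) - x - (2√2/(3π)) (1 - x)^{3/2}` satisfies `R(1) = 0` and
`R'(x) = -(arccos x - √2 √(1 - x)) / π`. With `t = √(1 - x)`, both bounds
`0 ≤ R(x) ≤ (2/(15π)) (1 - x)^{5/2}` therefore follow by monotonicity from
`√2 t ≤ arccos (1 - t²) ≤ √2 t + t³/3` on `[0, 1]`: the lower estimate is `1 - θ²/2 ≤ cos θ`,
the upper one a comparison of derivatives.
-/

open Real Set

lemma monotoneOn_Icc_of_hasDerivAt_nonneg {f f' : ℝ → ℝ} {a b : ℝ}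
    (hf : ContinuousOn f (Icc a b)) (hderiv : ∀ x ∈ Ioo a b, HasDerivAt f (f' x) x)
    (hf' : ∀ x ∈ Ioo a b, 0 ≤ f' x) : MonotoneOn f (Icc a b) := by
  refine monotoneOn_of_hasDerivWithinAt_nonneg (f' := f') (convex_Icc a b) hf
    (fun x hx ↦ ?_) fun x hx ↦ ?_
  all_goals rw [interior_Icc] at hx
  exacts [(hderiv x hx).hasDerivWithinAt, hf' x hx]

lemma antitoneOn_Icc_of_hasDerivAt_nonpos {f f' : ℝ → ℝ} {a b : ℝ}
    (hf : ContinuousOn f (Icc a b)) (hderiv : ∀ x ∈ Ioo a b, HasDerivAt f (f' x) x)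
    (hf' : ∀ x ∈ Ioo a b, f' x ≤ 0) : AntitoneOn f (Icc a b) := by
  refine antitoneOn_of_hasDerivWithinAt_nonpos (f' := f') (convex_Icc a b) hf
    (fun x hx ↦ ?_) fun x hx ↦ ?_
  all_goals rw [interior_Icc] at hx
  exacts [(hderiv x hx).hasDerivWithinAt, hf' x hx]

lemma hasDerivAt_one_sub_rpow {p x : ℝ} (h : 1 - x ≠ 0 ∨ 1 ≤ p) :
    HasDerivAt (fun y ↦ (1 - y) ^ p) (-(p * (1 - x) ^ (p - 1))) x := by
  simpa using ((hasDerivAt_id x).const_sub 1).rpow_const h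

lemma sqrt_two_mul_sqrt_one_sub_le_arccos {x : ℝ} (hx : x ∈ Icc (-1) 1) :
    √2 * √(1 - x) ≤ arccos x := by
  have hcos := one_sub_sq_div_two_le_cos (x := arccos x)
  rw [cos_arccos hx.1 hx.2] at hcos
  rw [← sqrt_mul zero_le_two, ← sqrt_sq (arccos_nonneg x)]
  exact sqrt_le_sqrt (by linarith)

lemma hasDerivAt_arccos_one_sub_sq {t : ℝ} (ht : t ∈ Ioo 0 1) :
    HasDerivAt (fun s ↦ arccos (1 - s ^ 2)) (2 / √(2 - t ^ 2)) t := by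
  obtain ⟨ht₀, ht₁⟩ := ht
  have hsqrt : √(1 - (1 - t ^ 2) ^ 2) = t * √(2 - t ^ 2) := by
    rw [show 1 - (1 - t ^ 2) ^ 2 = t ^ 2 * (2 - t ^ 2) by ring, sqrt_mul (sq_nonneg t),
      sqrt_sq ht₀.le]
  have hpos : 0 < √(2 - t ^ 2) := sqrt_pos.2 (by nlinarith)
  refine ((hasDerivAt_arccos (by nlinarith) (by nlinarith)).comp t
    ((hasDerivAt_pow 2 t).const_sub 1)).congr_deriv ?_
  rw [hsqrt]
  field_simp
  ring

lemma two_div_sqrt_two_sub_sq_le {t : ℝ} (ht : t ∈ Icc 0 1) :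
    2 / √(2 - t ^ 2) ≤ √2 + t ^ 2 := by
  obtain ⟨ht₀, ht₁⟩ := ht
  set r := √(2 - t ^ 2)
  have hr_sq : r ^ 2 = 2 - t ^ 2 := sq_sqrt (by nlinarith)
  have hr_one : 1 ≤ r := by rw [← sqrt_one]; exact sqrt_le_sqrt (by nlinarith)
  have hr_le : r ≤ √2 := sqrt_le_sqrt (by nlinarith)
  have h2 : √2 ^ 2 = 2 := sq_sqrt zero_le_two
  rw [div_le_iff₀ (by positivity)]
  -- `(√2 + t²) r - 2 = (√2 - r) (r² + √2 r - √2)` since `t² = 2 - r²`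
  nlinarith [mul_nonneg (sub_nonneg.2 hr_le)
    (by nlinarith [sqrt_nonneg 2] : (0 : ℝ) ≤ r ^ 2 + √2 * r - √2)]

lemma arccos_one_sub_sq_le {t : ℝ} (ht : t ∈ Icc 0 1) :
    arccos (1 - t ^ 2) ≤ √2 * t + t ^ 3 / 3 := by
  have hmono : MonotoneOn (fun s ↦ √2 * s + s ^ 3 / 3 - arccos (1 - s ^ 2)) (Icc 0 1) := by
    refine monotoneOn_Icc_of_hasDerivAt_nonneg (f' := fun s ↦ √2 + s ^ 2 - 2 / √(2 - s ^ 2))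
      (by fun_prop) (fun s hs ↦ ?_) fun s hs ↦ ?_
    · refine ((((hasDerivAt_id s).const_mul √2).add ((hasDerivAt_pow 3 s).div_const 3)).sub
        (hasDerivAt_arccos_one_sub_sq hs)).congr_deriv ?_
      ring
    · exact sub_nonneg.2 (two_div_sqrt_two_sub_sq_le (Ioo_subset_Icc_self hs))
  simpa using hmono (left_mem_Icc.2 zero_le_one) ht ht.1

lemma arccos_le_sqrt_two_mul_sqrt_one_sub_add {x : ℝ} (hx : x ∈ Icc 0 1) :
    arccos x ≤ √2 * √(1 - x) + (1 - x) ^ (3 / 2 : ℝ) / 3 := by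
  have h0 : 0 ≤ 1 - x := by linarith [hx.2]
  have h32 : (1 - x) ^ (3 / 2 : ℝ) = √(1 - x) ^ 3 := by
    rw [sqrt_eq_rpow, ← rpow_mul_natCast h0]; norm_num
  have := arccos_one_sub_sq_le ⟨sqrt_nonneg (1 - x), sqrt_le_one.2 (by linarith [hx.1])⟩
  rwa [sq_sqrt h0, sub_sub_cancel, ← h32] at this

lemma hasDerivAt_mul_arcsin_add_sqrt {x : ℝ} (hx : x ∈ Ioo (-1) 1) :
    HasDerivAt (fun y ↦ y * arcsin y + √(1 - y ^ 2)) (arcsin x) x := by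
  have h : 1 - x ^ 2 ≠ 0 := by nlinarith [hx.1, hx.2]
  refine (((hasDerivAt_id x).mul (hasDerivAt_arcsin hx.1.ne' hx.2.ne)).add
    (((hasDerivAt_pow 2 x).const_sub 1).sqrt h)).congr_deriv ?_
  simp only [id]
  field_simp
  ring

noncomputable def reluCorrelation (x : ℝ) : ℝ :=
  (1 / π) * x * arcsin x + (1 / π) * √(1 - x ^ 2) + x / 2

lemma continuous_reluCorrelation : Continuous reluCorrelation := by
  unfold reluCorrelation
  fun_prop

lemma reluCorrelation_one : reluCorrelation 1 = 1 := by
  simp only [reluCorrelation, arcsin_one, one_pow, sub_self, sqrt_zero]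
  field_simp
  ring

lemma hasDerivAt_reluCorrelation {x : ℝ} (hx : x ∈ Ioo (-1) 1) :
    HasDerivAt reluCorrelation (1 - arccos x / π) x := by
  have hfun : reluCorrelation = fun y ↦ (1 / π) * (y * arcsin y + √(1 - y ^ 2)) + y / 2 := by
    ext y
    simp only [reluCorrelation]
    ring
  rw [hfun]
  refine (((hasDerivAt_mul_arcsin_add_sqrt hx).const_mul (1 / π)).add
    ((hasDerivAt_id x).div_const 2)).congr_deriv ?_
  rw [arcsin_eq_pi_div_two_sub_arccos]
  field_simp
  ring

noncomputable def reluCorrelationRemainder (x : ℝ) : ℝ :=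
  reluCorrelation x - x - (2 * √2 / (3 * π)) * (1 - x) ^ (3 / 2 : ℝ)

lemma continuous_reluCorrelationRemainder : Continuous reluCorrelationRemainder := by
  unfold reluCorrelationRemainder
  have := continuous_reluCorrelation
  fun_prop (disch := norm_num)

lemma reluCorrelationRemainder_one : reluCorrelationRemainder 1 = 0 := by
  simp [reluCorrelationRemainder, reluCorrelation_one]

lemma hasDerivAt_reluCorrelationRemainder {x : ℝ} (hx : x ∈ Ioo (-1) 1) :
    HasDerivAt reluCorrelationRemainder (-(arccos x - √2 * √(1 - x)) / π) x := by
  refine (((hasDerivAt_reluCorrelation hx).sub (hasDerivAt_id x)).sub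
    ((hasDerivAt_one_sub_rpow (Or.inr (by norm_num))).const_mul _)).congr_deriv ?_
  rw [show (3 / 2 : ℝ) - 1 = 1 / 2 by norm_num, ← sqrt_eq_rpow]
  field_simp
  ring

lemma reluCorrelationRemainder_nonneg {x : ℝ} (hx : x ∈ Icc (-1) 1) :
    0 ≤ reluCorrelationRemainder x := by
  have hanti : AntitoneOn reluCorrelationRemainder (Icc (-1) 1) :=
    antitoneOn_Icc_of_hasDerivAt_nonpos continuous_reluCorrelationRemainder.continuousOn
      (fun y hy ↦ hasDerivAt_reluCorrelationRemainder hy) fun y hy ↦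
        div_nonpos_of_nonpos_of_nonneg (neg_nonpos.2 (sub_nonneg.2
          (sqrt_two_mul_sqrt_one_sub_le_arccos (Ioo_subset_Icc_self hy)))) pi_pos.le
  simpa [reluCorrelationRemainder_one] using hanti hx (right_mem_Icc.2 (by norm_num)) hx.2

lemma reluCorrelationRemainder_le {x : ℝ} (hx : x ∈ Icc 0 1) :
    reluCorrelationRemainder x ≤ 2 / (15 * π) * (1 - x) ^ (5 / 2 : ℝ) := by
  have hmono : MonotoneOn
      (fun y ↦ reluCorrelationRemainder y - 2 / (15 * π) * (1 - y) ^ (5 / 2 : ℝ)) (Icc 0 1) := by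
    refine monotoneOn_Icc_of_hasDerivAt_nonneg
      (f' := fun y ↦ -(arccos y - √2 * √(1 - y) - (1 - y) ^ (3 / 2 : ℝ) / 3) / π)
      (by have := continuous_reluCorrelationRemainder; fun_prop (disch := norm_num))
      (fun y hy ↦ ?_) fun y hy ↦ ?_
    · refine ((hasDerivAt_reluCorrelationRemainder ⟨by linarith [hy.1], hy.2⟩).sub
        ((hasDerivAt_one_sub_rpow (Or.inr (by norm_num))).const_mul _)).congr_deriv ?_
      rw [show (5 / 2 : ℝ) - 1 = 3 / 2 by norm_num]
      field_simp
      ring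
    · have := arccos_le_sqrt_two_mul_sqrt_one_sub_add (Ioo_subset_Icc_self hy)
      exact div_nonneg (neg_nonneg.2 (by linarith)) pi_pos.le
  simpa [reluCorrelationRemainder_one] using hmono hx (right_mem_Icc.2 zero_le_one) hx.2

/-- Taylor-type expansion near `x = 1` of the ReLU correlation function
`f(x) = (1/π) x arcsin(x) + (1/π)√(1−x²) + x/2`:
`|f(x) − x − (2√2/(3π))(1−x)^{3/2}| ≤ C (1−x)^{5/2}` on `[0,1]`. -/
theorem stmt8 : ∃ C : ℝ, 0 < C ∧ ∀ x ∈ Icc (0:ℝ) 1,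
    |((1 / π) * x * Real.arcsin x + (1 / π) * Real.sqrt (1 - x ^ 2) + x / 2) - x -
        (2 * Real.sqrt 2 / (3 * π)) * (1 - x) ^ ((3 : ℝ) / 2)| ≤
      C * (1 - x) ^ ((5 : ℝ) / 2) := by
  refine ⟨2 / (15 * π), by positivity, fun x hx ↦ ?_⟩
  show |reluCorrelationRemainder x| ≤ _
  rw [abs_of_nonneg (reluCorrelationRemainder_nonneg ⟨by linarith [hx.1], hx.2⟩)]
  exact reluCorrelationRemainder_le hx
end

section
/- Let s > 0 and C ≥ 0, and let (γ_l)_{l ≥ 0} be a sequence of strictly positive reals with γ_l → 0 such that |γ_{l+1} − γ_l + s γ_l^{3/2}| ≤ C γ_l^{5/2} for all l. Then lim_{l → ∞} l² γ_l = 4/s². -/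
open Real Filter Topology

/-!
With `b l = γ_l^{-1/2}`, the recursion gives `γ_l - γ_{l+1} ∼ s γ_l^{3/2}`, hence
`γ_{l+1}/γ_l → 1`, and
`b_{l+1} - b_l = (γ_l - γ_{l+1}) / (γ_l^{3/2} · √(γ_{l+1}/γ_l) · (1 + √(γ_{l+1}/γ_l))) → s/2`.
By Cesàro, `b_l / l → s/2`, i.e. `l² γ_l = (l / b_l)² → 4/s²`.
-/

theorem Filter.Tendsto.inv_smul_of_tendsto_sub {E : Type*} [NormedAddCommGroup E]
    [NormedSpace ℝ E] {b : ℕ → E} {L : E} (h : Tendsto (fun n ↦ b (n + 1) - b n) atTop (𝓝 L)) :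
    Tendsto (fun n : ℕ ↦ (n : ℝ)⁻¹ • b n) atTop (𝓝 L) := by
  have hb0 : Tendsto (fun n : ℕ ↦ (n : ℝ)⁻¹ • b 0) atTop (𝓝 0) := by
    simpa using (tendsto_inv_atTop_nhds_zero_nat (𝕜 := ℝ)).smul_const (b 0)
  refine (zero_add L ▸ hb0.add h.cesaro_smul).congr fun n ↦ ?_
  rw [Finset.sum_range_sub, ← smul_add, add_sub_cancel]

theorem one_div_sqrt_sub_one_div_sqrt {a c : ℝ} (ha : 0 < a) (hc : 0 < c) :
    1 / √c - 1 / √a = (a - c) / (a * √a) / (√(c / a) * (1 + √(c / a))) := by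
  obtain ⟨x, hx, rfl⟩ : ∃ x > 0, x ^ 2 = a := ⟨√a, sqrt_pos.2 ha, sq_sqrt ha.le⟩
  obtain ⟨y, hy, rfl⟩ : ∃ y > 0, y ^ 2 = c := ⟨√c, sqrt_pos.2 hc, sq_sqrt hc.le⟩
  rw [← div_pow, sqrt_sq (div_pos hy hx).le, sqrt_sq hy.le, sqrt_sq hx.le]
  field_simp
  ring

section

variable {γ : ℕ → ℝ} {s : ℝ}

theorem tendsto_decrement_div_of_abs_le {C : ℝ} (hpos : ∀ l, 0 < γ l)
    (hlim : Tendsto γ atTop (𝓝 0))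
    (hineq : ∀ l, |γ (l + 1) - γ l + s * γ l ^ ((3 : ℝ) / 2)| ≤ C * γ l ^ ((5 : ℝ) / 2)) :
    Tendsto (fun l ↦ (γ l - γ (l + 1)) / (γ l * √(γ l))) atTop (𝓝 s) := by
  have hdist : ∀ l, dist ((γ l - γ (l + 1)) / (γ l * √(γ l))) s ≤ C * γ l := fun l ↦ by
    have hm : 0 < γ l * √(γ l) := mul_pos (hpos l) (sqrt_pos.2 (hpos l))
    have h32 : γ l ^ ((3 : ℝ) / 2) = γ l * √(γ l) := by
      rw [sqrt_eq_rpow, ← rpow_one_add' (hpos l).le (by norm_num)]; norm_num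
    have h52 : γ l ^ ((5 : ℝ) / 2) = γ l * (γ l * √(γ l)) := by
      rw [sqrt_eq_rpow, ← rpow_one_add' (hpos l).le (by norm_num),
        ← rpow_one_add' (hpos l).le (by norm_num)]; norm_num
    have hneg : -((γ l - γ (l + 1)) / (γ l * √(γ l)) - s)
        = (γ (l + 1) - γ l + s * γ l ^ ((3 : ℝ) / 2)) / (γ l * √(γ l)) := by
      rw [h32]; field_simp [(hpos l).ne', (sqrt_pos.2 (hpos l)).ne']; ring
    rw [dist_eq_norm, norm_eq_abs, ← abs_neg, hneg, abs_div, abs_of_pos hm, div_le_iff₀ hm,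
      mul_assoc, ← h52]
    exact hineq l
  exact tendsto_iff_dist_tendsto_zero.2 <| squeeze_zero (fun _ ↦ dist_nonneg) hdist
    (by simpa using hlim.const_mul C)

theorem tendsto_succ_div_of_tendsto_decrement (hpos : ∀ l, 0 < γ l)
    (hlim : Tendsto γ atTop (𝓝 0))
    (hd : Tendsto (fun l ↦ (γ l - γ (l + 1)) / (γ l * √(γ l))) atTop (𝓝 s)) :
    Tendsto (fun l ↦ γ (l + 1) / γ l) atTop (𝓝 1) := by
  have h := tendsto_const_nhds (x := (1 : ℝ)) |>.sub (hlim.sqrt.mul hd)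
  rw [sqrt_zero, zero_mul, sub_zero] at h
  refine h.congr fun l ↦ ?_
  field_simp [(hpos l).ne', (sqrt_pos.2 (hpos l)).ne']
  ring

theorem tendsto_one_div_sqrt_sub_of_tendsto_decrement (hpos : ∀ l, 0 < γ l)
    (hd : Tendsto (fun l ↦ (γ l - γ (l + 1)) / (γ l * √(γ l))) atTop (𝓝 s))
    (hr : Tendsto (fun l ↦ γ (l + 1) / γ l) atTop (𝓝 1)) :
    Tendsto (fun l ↦ 1 / √(γ (l + 1)) - 1 / √(γ l)) atTop (𝓝 (s / 2)) := by
  have hden : Tendsto (fun l ↦ √(γ (l + 1) / γ l) * (1 + √(γ (l + 1) / γ l))) atTop (𝓝 2) := by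
    have h := hr.sqrt
    rw [sqrt_one] at h
    simpa [one_add_one_eq_two] using h.mul (h.const_add 1)
  refine (hd.div hden two_ne_zero).congr fun l ↦ ?_
  rw [Pi.div_apply, one_div_sqrt_sub_one_div_sqrt (hpos l) (hpos (l + 1))]

end

theorem stmt11_general (s C : ℝ) (hs : 0 < s)
    (γ : ℕ → ℝ) (hpos : ∀ l, 0 < γ l) (hlim : Tendsto γ atTop (𝓝 0))
    (hineq : ∀ l, |γ (l + 1) - γ l + s * γ l ^ ((3 : ℝ) / 2)| ≤ C * γ l ^ ((5 : ℝ) / 2)) :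
    Tendsto (fun l : ℕ => (l : ℝ) ^ 2 * γ l) atTop (𝓝 (4 / s ^ 2)) := by
  have hd := tendsto_decrement_div_of_abs_le hpos hlim hineq
  have hb : Tendsto (fun n : ℕ ↦ (n : ℝ)⁻¹ • (1 / √(γ n))) atTop (𝓝 (s / 2)) :=
    (tendsto_one_div_sqrt_sub_of_tendsto_decrement hpos hd
      (tendsto_succ_div_of_tendsto_decrement hpos hlim hd)).inv_smul_of_tendsto_sub
  convert (hb.inv₀ (by positivity)).pow 2 using 1
  · ext n
    rw [smul_eq_mul, mul_one_div, inv_div, div_pow, sq_sqrt (hpos n).le, inv_pow,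
      div_inv_eq_mul, mul_comm]
  · congr 1
    field_simp
    norm_num

/-- Asymptotic lemma: if `γ_l > 0`, `γ_l → 0` and
`|γ_{l+1} − γ_l + s γ_l^{3/2}| ≤ C γ_l^{5/2}` for all `l`, then `l² γ_l → 4/s²`. -/
theorem stmt11 (s C : ℝ) (hs : 0 < s) (hC : 0 ≤ C)
    (γ : ℕ → ℝ) (hpos : ∀ l, 0 < γ l) (hlim : Tendsto γ atTop (𝓝 0))
    (hineq : ∀ l, |γ (l + 1) - γ l + s * γ l ^ ((3 : ℝ) / 2)| ≤ C * γ l ^ ((5 : ℝ) / 2)) :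
    Tendsto (fun l : ℕ => (l : ℝ) ^ 2 * γ l) atTop (𝓝 (4 / s ^ 2)) :=
  stmt11_general s C hs γ hpos hlim hineq
end

section
/- Let φ: ℝ → ℝ be continuous with φ(0) = 0, |φ(y)| ≤ k|y| for all y and some k > 0, differentiable on ℝ∖{0} with |φ'| ≤ k' for some k' > 0, and such that φ' has one-sided limits φ'(0⁺) and φ'(0⁻) at 0 that are not both zero. Let (σ_{b,n}), (σ_{w,n}), (q_n) be sequences of positive reals with σ_{b,n} → 0 and q_n → 0, satisfying for each n: q_n = σ_{b,n}² + σ_{w,n}² E[φ(√(q_n) Z)²] and σ_{w,n}² E[φ'(√(q_n) Z)²] = 1. Then σ_{b,n}²/q_n → 0 and σ_{w,n}² → 2/(φ'(0⁺)² + φ'(0⁻)²). -/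
open MeasureTheory ProbabilityTheory Real Filter Topology Set

instance : IsProbabilityMeasure stdG :=
  inferInstanceAs (IsProbabilityMeasure (gaussianReal 0 1))

instance : stdG.IsNegInvariant :=
  ⟨by simpa [Measure.neg, stdG] using gaussianReal_map_neg (μ := 0) (v := 1)⟩

instance : NullSingletonClass stdG :=
  ⟨fun x => gaussianReal_absolutelyContinuous 0 one_ne_zero (measure_singleton x)⟩

lemma integrable_sq_stdG : Integrable (fun z => z ^ 2) stdG :=
  (memLp_id_gaussianReal 2).integrable_sq

lemma integral_sq_stdG : ∫ z, z ^ 2 ∂stdG = 1 := by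
  have h := variance_fun_id_gaussianReal (μ := 0) (v := 1)
  rw [variance_eq_integral aemeasurable_id', integral_id_gaussianReal] at h
  simpa [stdG] using h

section SymmetricMeasure

variable {μ : Measure ℝ} [μ.IsNegInvariant] [NullSingletonClass μ] {g : ℝ → ℝ}

theorem integral_ite_pos_mul_of_even (hg : Integrable g μ) (hg_even : ∀ z, g (-z) = g z)
    (a b : ℝ) :
    ∫ z, (if 0 < z then a else b) * g z ∂μ = (a + b) / 2 * ∫ z, g z ∂μ := by
  set f : ℝ → ℝ := fun z => (if 0 < z then a else b) * g z
  have hf : Integrable f μ := by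
    refine hg.bdd_mul (c := max |a| |b|) ?_ (Eventually.of_forall fun z => ?_)
    · exact (Measurable.ite measurableSet_Ioi measurable_const measurable_const).aestronglyMeasurable
    · split_ifs <;> simp
  -- Off the null set `{0}`, the reflection `z ↦ -z` swaps the two branches.
  have hf_add_neg : ∀ᵐ z ∂μ, f z + f (-z) = (a + b) * g z := by
    filter_upwards [Measure.ae_ne μ 0] with z hz
    rcases hz.lt_or_gt with hz | hz <;>
      simp only [f, ite_mul, hz, hz.not_gt, ↓reduceIte, Left.neg_pos_iff, hg_even] <;> ring
  have : 2 * ∫ z, f z ∂μ = (a + b) * ∫ z, g z ∂μ := by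
    calc 2 * ∫ z, f z ∂μ = ∫ z, f z ∂μ + ∫ z, f (-z) ∂μ := by
          rw [integral_neg_eq_self]; ring
      _ = ∫ z, (a + b) * g z ∂μ := by
          rw [← integral_add hf hf.comp_neg]; exact integral_congr_ae hf_add_neg
      _ = (a + b) * ∫ z, g z ∂μ := integral_const_mul _ _
  linarith

theorem tendsto_integral_comp_mul_of_tendsto_nhdsGT_nhdsLT {ι : Type*} {l : Filter ι}
    [l.IsCountablyGenerated] {ψ : ℝ → ℝ} {a b C : ℝ} {s : ι → ℝ}
    (hψ : Measurable ψ) (hψC : ∀ x ≠ 0, |ψ x| ≤ C)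
    (ha : Tendsto ψ (𝓝[>] 0) (𝓝 a)) (hb : Tendsto ψ (𝓝[<] 0) (𝓝 b))
    (hg : Integrable g μ) (hg_even : ∀ z, g (-z) = g z) (hs : Tendsto s l (𝓝[>] 0)) :
    Tendsto (fun n => ∫ z, ψ (s n * z) * g z ∂μ) l (𝓝 ((a + b) / 2 * ∫ z, g z ∂μ)) := by
  obtain ⟨hs0, hs_pos⟩ := tendsto_nhdsWithin_iff.1 hs
  rw [← integral_ite_pos_mul_of_even hg hg_even]
  refine tendsto_integral_filter_of_dominated_convergence (fun z => C * |g z|)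
    (Eventually.of_forall fun n => ?_) ?_ (hg.abs.const_mul C) ?_
  · exact (hψ.comp (measurable_const_mul _)).aestronglyMeasurable.mul hg.aestronglyMeasurable
  · filter_upwards [hs_pos] with n hn
    filter_upwards [Measure.ae_ne μ 0] with z hz
    rw [norm_mul, Real.norm_eq_abs, Real.norm_eq_abs]
    exact mul_le_mul_of_nonneg_right (hψC _ (mul_ne_zero hn.ne' hz)) (abs_nonneg _)
  · filter_upwards [Measure.ae_ne μ 0] with z hz
    rcases hz.lt_or_gt with hz | hz
    · have hsz : Tendsto (fun n => s n * z) l (𝓝[<] 0) := tendsto_nhdsWithin_iff.2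
        ⟨by simpa using hs0.mul_const z, hs_pos.mono fun n hn => mul_neg_of_pos_of_neg hn hz⟩
      simpa [hz.not_gt] using (hb.comp hsz).mul_const (g z)
    · have hsz : Tendsto (fun n => s n * z) l (𝓝[>] 0) := tendsto_nhdsWithin_iff.2
        ⟨by simpa using hs0.mul_const z, hs_pos.mono fun n hn => mul_pos hn hz⟩
      simpa [hz] using (ha.comp hsz).mul_const (g z)

end SymmetricMeasure

theorem tendsto_deriv_nhdsWithin_of_hasDerivAt {f f' : ℝ → ℝ} {s : Set ℝ} {a d : ℝ}
    (hf : ∀ x ∈ s, HasDerivAt f (f' x) x) (hf' : Tendsto f' (𝓝[s] a) (𝓝 d)) :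
    Tendsto (deriv f) (𝓝[s] a) (𝓝 d) :=
  hf'.congr' (eventually_nhdsWithin_of_forall fun x hx => (hf x hx).deriv.symm)

section Slope

variable {f f' : ℝ → ℝ} {a : ℝ}

theorem tendsto_div_self_nhdsGT_of_hasDerivAt (hf : ∀ x ∈ Ioi 0, HasDerivAt f (f' x) x)
    (hcont : ContinuousWithinAt f (Ioi 0) 0) (hf0 : f 0 = 0)
    (hf' : Tendsto f' (𝓝[>] 0) (𝓝 a)) :
    Tendsto (fun t => f t / t) (𝓝[>] 0) (𝓝 a) := by
  have h := hasDerivWithinAt_iff_tendsto_slope.1 <| hasDerivWithinAt_Ici_of_tendsto_deriv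
    (fun x hx => (hf x hx).differentiableAt.differentiableWithinAt) hcont self_mem_nhdsWithin
    (tendsto_deriv_nhdsWithin_of_hasDerivAt hf hf')
  have hslope : slope f 0 = fun t => f t / t := funext fun t => by simp [slope_def_field, hf0]
  rwa [Ici_sdiff_left, hslope] at h

theorem tendsto_div_self_nhdsLT_of_hasDerivAt (hf : ∀ x ∈ Iio 0, HasDerivAt f (f' x) x)
    (hcont : ContinuousWithinAt f (Iio 0) 0) (hf0 : f 0 = 0)
    (hf' : Tendsto f' (𝓝[<] 0) (𝓝 a)) :
    Tendsto (fun t => f t / t) (𝓝[<] 0) (𝓝 a) := by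
  have h := hasDerivWithinAt_iff_tendsto_slope.1 <| hasDerivWithinAt_Iic_of_tendsto_deriv
    (fun x hx => (hf x hx).differentiableAt.differentiableWithinAt) hcont self_mem_nhdsWithin
    (tendsto_deriv_nhdsWithin_of_hasDerivAt hf hf')
  have hslope : slope f 0 = fun t => f t / t := funext fun t => by simp [slope_def_field, hf0]
  rwa [Iic_sdiff_right, hslope] at h

end Slope

section Activation

variable {μ : Measure ℝ} [μ.IsNegInvariant] [NullSingletonClass μ]
  {ι : Type*} {l : Filter ι} [l.IsCountablyGenerated] {s : ι → ℝ}
  {φ φd : ℝ → ℝ} {dp dm : ℝ}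

theorem tendsto_integral_deriv_sq_comp_mul [IsProbabilityMeasure μ] {C : ℝ}
    (hφd : ∀ x, x ≠ 0 → HasDerivAt φ (φd x) x) (hC : ∀ x, x ≠ 0 → |φd x| ≤ C)
    (hdp : Tendsto φd (𝓝[>] 0) (𝓝 dp)) (hdm : Tendsto φd (𝓝[<] 0) (𝓝 dm))
    (hs : Tendsto s l (𝓝[>] 0)) :
    Tendsto (fun n => ∫ z, φd (s n * z) ^ 2 ∂μ) l (𝓝 ((dp ^ 2 + dm ^ 2) / 2)) := by
  -- `φd` need not be measurable, but it agrees off `0` with the measurable `deriv φ`.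
  have h := tendsto_integral_comp_mul_of_tendsto_nhdsGT_nhdsLT (μ := μ) (g := fun _ => 1)
    ((measurable_deriv φ).pow_const 2) (C := C ^ 2)
    (fun x hx => by
      rw [abs_pow, (hφd x hx).deriv]; exact pow_le_pow_left₀ (abs_nonneg _) (hC x hx) 2)
    ((tendsto_deriv_nhdsWithin_of_hasDerivAt (fun x hx => hφd x hx.ne') hdp).pow 2)
    ((tendsto_deriv_nhdsWithin_of_hasDerivAt (fun x hx => hφd x hx.ne) hdm).pow 2)
    (integrable_const 1) (fun _ => rfl) hs
  simp only [mul_one, integral_const, probReal_univ, smul_eq_mul] at h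
  refine h.congr' ?_
  filter_upwards [tendsto_nhdsWithin_iff.1 hs |>.2] with n hn
  refine integral_congr_ae ?_
  filter_upwards [Measure.ae_ne μ 0] with z hz
  rw [(hφd _ (mul_ne_zero hn.ne' hz)).deriv]

theorem tendsto_integral_sq_comp_mul_div_sq {k : ℝ} (hφc : Continuous φ)
    (hφ0 : φ 0 = 0) (hk : ∀ y, |φ y| ≤ k * |y|) (hφd : ∀ x, x ≠ 0 → HasDerivAt φ (φd x) x)
    (hdp : Tendsto φd (𝓝[>] 0) (𝓝 dp)) (hdm : Tendsto φd (𝓝[<] 0) (𝓝 dm))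
    (hs : Tendsto s l (𝓝[>] 0)) (hμ : Integrable (fun z => z ^ 2) μ) :
    Tendsto (fun n => (∫ z, φ (s n * z) ^ 2 ∂μ) / s n ^ 2) l
      (𝓝 ((dp ^ 2 + dm ^ 2) / 2 * ∫ z, z ^ 2 ∂μ)) := by
  have h := tendsto_integral_comp_mul_of_tendsto_nhdsGT_nhdsLT (μ := μ)
    (ψ := fun t => (φ t / t) ^ 2) (g := fun z => z ^ 2)
    ((hφc.measurable.div measurable_id).pow_const 2) (C := k ^ 2)
    (fun x hx => by
      rw [abs_pow, abs_div]
      exact pow_le_pow_left₀ (by positivity) ((div_le_iff₀ (abs_pos.2 hx)).2 (hk x)) 2)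
    ((tendsto_div_self_nhdsGT_of_hasDerivAt (fun x hx => hφd x hx.ne')
      hφc.continuousWithinAt hφ0 hdp).pow 2)
    ((tendsto_div_self_nhdsLT_of_hasDerivAt (fun x hx => hφd x hx.ne)
      hφc.continuousWithinAt hφ0 hdm).pow 2)
    hμ neg_sq hs
  refine h.congr' ?_
  filter_upwards [tendsto_nhdsWithin_iff.1 hs |>.2] with n hn
  rw [← integral_div]
  refine integral_congr_ae ?_
  filter_upwards [Measure.ae_ne μ 0] with z hz
  have : s n ≠ 0 := hn.ne'
  field_simp

end Activation

theorem stmt13_general (φ φd : ℝ → ℝ) (k k' dp dm : ℝ)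
    (hφc : Continuous φ) (hφ0 : φ 0 = 0)
    (hbnd : ∀ y : ℝ, |φ y| ≤ k * |y|)
    (hφd : ∀ x : ℝ, x ≠ 0 → HasDerivAt φ (φd x) x)
    (hdbnd : ∀ x : ℝ, x ≠ 0 → |φd x| ≤ k')
    (hdp : Tendsto φd (𝓝[>] 0) (𝓝 dp))
    (hdm : Tendsto φd (𝓝[<] 0) (𝓝 dm))
    (hne : ¬(dp = 0 ∧ dm = 0))
    (σb σw q : ℕ → ℝ)
    (hqpos : ∀ n, 0 < q n)
    (hq0 : Tendsto q atTop (𝓝 0))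
    (hfix : ∀ n, q n = (σb n) ^ 2 + (σw n) ^ 2 * ∫ z, (φ (Real.sqrt (q n) * z)) ^ 2 ∂stdG)
    (heoc : ∀ n, (σw n) ^ 2 * ∫ z, (φd (Real.sqrt (q n) * z)) ^ 2 ∂stdG = 1) :
    Tendsto (fun n => (σb n) ^ 2 / q n) atTop (𝓝 0) ∧
    Tendsto (fun n => (σw n) ^ 2) atTop (𝓝 (2 / (dp ^ 2 + dm ^ 2))) := by
  have hs : Tendsto (fun n => √(q n)) atTop (𝓝[>] 0) := tendsto_nhdsWithin_iff.2
    ⟨by simpa using hq0.sqrt, Eventually.of_forall fun n => sqrt_pos.2 (hqpos n)⟩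
  set L := (dp ^ 2 + dm ^ 2) / 2
  have hL : L ≠ 0 := by
    rcases not_and_or.1 hne with h | h <;> positivity
  have hσw : Tendsto (fun n => σw n ^ 2) atTop (𝓝 L⁻¹) :=
    ((tendsto_integral_deriv_sq_comp_mul hφd hdbnd hdp hdm hs).inv₀ hL).congr
      fun n => (eq_inv_of_mul_eq_one_left (heoc n)).symm
  have hvar : Tendsto (fun n => (∫ z, φ (√(q n) * z) ^ 2 ∂stdG) / q n) atTop (𝓝 L) := by
    have h := tendsto_integral_sq_comp_mul_div_sq hφc hφ0 hbnd hφd hdp hdm hs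
      integrable_sq_stdG
    simpa only [sq_sqrt (hqpos _).le, integral_sq_stdG, mul_one] using h
  have hratio n : σb n ^ 2 / q n = 1 - σw n ^ 2 * ((∫ z, φ (√(q n) * z) ^ 2 ∂stdG) / q n) := by
    rw [← mul_div_assoc, eq_sub_iff_add_eq, ← add_div, ← hfix n, div_self (hqpos n).ne']
  refine ⟨?_, by simpa only [L, inv_div] using hσw⟩
  simpa [hratio, inv_mul_cancel₀ hL] using (tendsto_const_nhds (x := (1 : ℝ))).sub (hσw.mul hvar)

/-- If `(σ_{b,n}, σ_{w,n})` is on the edge of chaos with limiting variance `q_n`, and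
`σ_{b,n} → 0`, `q_n → 0`, then `σ_{b,n}²/q_n → 0` and `σ_{w,n}² → 2/(φ'(0⁺)² + φ'(0⁻)²)`. -/
theorem stmt13 (φ φd : ℝ → ℝ) (k k' dp dm : ℝ)
    (hφc : Continuous φ) (hφ0 : φ 0 = 0)
    (hk : 0 < k) (hbnd : ∀ y : ℝ, |φ y| ≤ k * |y|)
    (hφd : ∀ x : ℝ, x ≠ 0 → HasDerivAt φ (φd x) x)
    (hk' : 0 < k') (hdbnd : ∀ x : ℝ, x ≠ 0 → |φd x| ≤ k')
    (hdp : Tendsto φd (𝓝[>] 0) (𝓝 dp))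
    (hdm : Tendsto φd (𝓝[<] 0) (𝓝 dm))
    (hne : ¬(dp = 0 ∧ dm = 0))
    (σb σw q : ℕ → ℝ)
    (hσbpos : ∀ n, 0 < σb n) (hσwpos : ∀ n, 0 < σw n) (hqpos : ∀ n, 0 < q n)
    (hσb0 : Tendsto σb atTop (𝓝 0)) (hq0 : Tendsto q atTop (𝓝 0))
    (hfix : ∀ n, q n = (σb n) ^ 2 + (σw n) ^ 2 * ∫ z, (φ (Real.sqrt (q n) * z)) ^ 2 ∂stdG)
    (heoc : ∀ n, (σw n) ^ 2 * ∫ z, (φd (Real.sqrt (q n) * z)) ^ 2 ∂stdG = 1) :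
    Tendsto (fun n => (σb n) ^ 2 / q n) atTop (𝓝 0) ∧
    Tendsto (fun n => (σw n) ^ 2) atTop (𝓝 (2 / (dp ^ 2 + dm ^ 2))) :=
  stmt13_general φ φd k k' dp dm hφc hφ0 hbnd hφd hdbnd hdp hdm hne σb σw q hqpos hq0 hfix heoc
end
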